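/- In the dual space S_C, for every x,y ∈ S_C one has [x,y] ⊆ I(x,y) ⊆ N([x,y], 1), where N(·,1) denotes the closed 1-neighbourhood in the metric d_C. -/

import Mathlib

/-!
Common definitions: coarse geometry (hyperbolicity, rough geodesics, stable cylinders,
quasi-isometries, quasitrees, coarse medians), word metrics, spaces with walls,
dualisable systems and their dual spaces, walls of quasitrees coming from balls,
and the induced wall structures on images of spaces in products of quasitrees.
-/

open Set Metric

namespace GSC

universe u v w

variable {X Y : Type*}

/-- The Gromov product `⟨y,z⟩_w` with respect to the distance function `d`. -/
noncomputable def gp (d : X → X → ℝ) (w y z : X) : ℝ := (d w y + d w z - d y z) / 2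

/-- `d` satisfies the four-point `δ`-hyperbolicity condition. -/
def IsHyp (d : X → X → ℝ) (δ : ℝ) : Prop :=
  ∀ w x y z : X, min (gp d w x y) (gp d w y z) - δ ≤ gp d w x z

/-- `γ`, restricted to `[a,b]`, is a `k`-rough geodesic from `x` to `y`:
a `(1,k)`-quasi-isometric embedding of an interval joining `x` to `y`. -/
def IsRG (d : X → X → ℝ) (k : ℝ) (x y : X) (γ : ℝ → X) (a b : ℝ) : Prop :=
  a ≤ b ∧ γ a = x ∧ γ b = y ∧
    ∀ s ∈ Icc a b, ∀ t ∈ Icc a b, abs (d (γ s) (γ t) - |s - t|) ≤ k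

/-- `X` is `k`-roughly geodesic: any two points are joined by a `k`-rough geodesic. -/
def RGSpace (d : X → X → ℝ) (k : ℝ) : Prop :=
  ∀ x y : X, ∃ γ a b, IsRG d k x y γ a b

/-- The (closed) ball of radius `r` about `x` for the distance function `d`. -/
def rball (d : X → X → ℝ) (x : X) (r : ℝ) : Set X := {p | d x p ≤ r}

/-- `C` is a choice of `θ`-cylinders (with respect to `δ`-rough geodesics): for all `x,y`,
every `δ`-rough geodesic from `x` to `y` is contained in `C x y`, and `C x y` is contained
in the `θ`-neighbourhood of every `δ`-rough geodesic from `x` to `y`. -/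
def IsCylinders (d : X → X → ℝ) (δ θ : ℝ) (C : X → X → Set X) : Prop :=
  ∀ x y γ a b, IsRG d δ x y γ a b →
    γ '' Icc a b ⊆ C x y ∧ ∀ p ∈ C x y, ∃ q ∈ γ '' Icc a b, d p q ≤ θ

/-- The choice of cylinders `C` is globally `(k,R)`-stable: it is reversible, and for any
`x,y,z` the cylinders `C x y` and `C x z` agree inside the ball of radius `⟨y,z⟩ₓ` about `x`
after removing `k` balls of radius `R`. -/
def IsStable (d : X → X → ℝ) (k : ℕ) (R : ℝ) (C : X → X → Set X) : Prop :=
  (∀ x y, C x y = C y x) ∧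
    ∀ x y z : X, ∃ B : Fin k → X,
      (C x y ∩ rball d x (gp d x y z)) \ (⋃ i, rball d (B i) R) =
      (C x z ∩ rball d x (gp d x y z)) \ (⋃ i, rball d (B i) R)

/-- `μ` is a coarse median (coarse centre of triangles) for the hyperbolic distance `d`:
the distance of `μ x y z` to each vertex agrees with the corresponding Gromov product up
to the additive error `c`. -/
def IsCoarseMedian (d : X → X → ℝ) (μ : X → X → X → X) (c : ℝ) : Prop :=
  ∀ x y z : X,
    |d x (μ x y z) - gp d x y z| ≤ c ∧
    |d y (μ x y z) - gp d y x z| ≤ c ∧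
    |d z (μ x y z) - gp d z x y| ≤ c

/-- `f` is a `lam`-quasi-isometric embedding from `(X,dX)` to `(Y,dY)`. -/
def IsQIE (dX : X → X → ℝ) (dY : Y → Y → ℝ) (f : X → Y) (lam : ℝ) : Prop :=
  ∀ x x' : X, dX x x' / lam - lam ≤ dY (f x) (f x') ∧ dY (f x) (f x') ≤ lam * dX x x' + lam

/-- `f` is a `lam`-quasi-isometry from `(X,dX)` to `(Y,dY)`. -/
def IsQI (dX : X → X → ℝ) (dY : Y → Y → ℝ) (f : X → Y) (lam : ℝ) : Prop :=
  IsQIE dX dY f lam ∧ ∀ y : Y, ∃ x : X, dY (f x) y ≤ lam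

/-- `(T,d)` is a quasitree (with constant `lam`): it is roughly geodesic and
quasi-isometric to a simplicial tree. -/
def IsQuasitree {T : Type u} (d : T → T → ℝ) (lam : ℝ) : Prop :=
  RGSpace d lam ∧
    ∃ (V : Type u) (Γ : SimpleGraph V), Γ.IsTree ∧
      ∃ f : T → V, IsQIE d (fun a b => (Γ.dist a b : ℝ)) f lam ∧
        ∀ v : V, ∃ t : T, (Γ.dist v (f t) : ℝ) ≤ lam

/-- The `ℓ¹` distance on a finite product. -/
noncomputable def l1distF {m : ℕ} {T : Fin m → Type*} (dT : ∀ i, T i → T i → ℝ)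
    (p q : ∀ i, T i) : ℝ := ∑ i, dT i (p i) (q i)

/-- The word metric on a group `G` with respect to a generating set `A`
(the distance function of the Cayley graph of `(G,A)`). -/
noncomputable def wordDist {G : Type*} [Group G] (A : Set G) (g h : G) : ℝ :=
  (sInf {n : ℕ | ∃ l : List G, l.length = n ∧ (∀ a ∈ l, a ∈ A ∨ a⁻¹ ∈ A) ∧
    l.prod = g⁻¹ * h} : ℕ)

/-- `(X, dX, μX)`, with the `G`-action `ρ`, admits a `G`-equivariant quasimedian
quasi-isometric embedding into a product of `m` quasitrees (with the `ℓ¹` metric and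
coordinatewise coarse median); i.e. the strong quasitree rank of `(X,G)` is at most `m`. -/
def HasStrongQT {G : Type*} [Group G] {X : Type u} (ρ : G →* Equiv.Perm X)
    (dX : X → X → ℝ) (μX : X → X → X → X) (m : ℕ) : Prop :=
  ∃ (T : Fin m → Type u) (dT : ∀ i, T i → T i → ℝ) (μT : ∀ i, T i → T i → T i → T i)
    (f : X → ∀ i, T i) (α : G →* Equiv.Perm (∀ i, T i)) (lam c : ℝ),
      (∀ i, IsQuasitree (dT i) lam) ∧
      (∀ i, IsCoarseMedian (dT i) (μT i) c) ∧
      IsQIE dX (l1distF dT) f lam ∧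
      (∀ x y z : X, l1distF dT (fun i => μT i (f x i) (f y i) (f z i)) (f (μX x y z)) ≤ c) ∧
      (∀ (g : G) p q, l1distF dT (α g p) (α g q) = l1distF dT p q) ∧
      (∀ (g : G) x, f (ρ g x) = α g (f x))

/-! ### Sets with walls, ultrafilters and dualisable systems

A wall on a set `X` is a bipartition into two halfspaces.  We model a collection of
walls as a collection `H` of halfspaces (subsets of `X`) that is closed under
complementation; the wall corresponding to a halfspace `h` is the bipartition `{h, hᶜ}`. -/

/-- `H` is a collection of halfspaces closed under complementation (a set of walls). -/
def WallClosed (H : Set (Set X)) : Prop := ∀ h ∈ H, hᶜ ∈ H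

/-- `x` is an ultrafilter on the walls `H`: a consistent choice of one halfspace of every
wall of `H`. -/
def IsUF (H : Set (Set X)) (x : Set (Set X)) : Prop :=
  x ⊆ H ∧ (∀ h ∈ H, (h ∈ x ↔ hᶜ ∉ x)) ∧ ∀ h ∈ x, ∀ k ∈ H, h ⊆ k → k ∈ x

/-- The principal ultrafilter of a point `s`: the halfspaces containing `s`. -/
def pUF (H : Set (Set X)) (s : X) : Set (Set X) := {h ∈ H | s ∈ h}

/-- The set `c` of walls separates the ultrafilters `x` and `y`: they orient every
wall of `c` oppositely. -/
def Seps (x y c : Set (Set X)) : Prop := ∀ h ∈ c, (h ∈ x ↔ h ∉ y)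

/-- `d_D(x,y) = sup { |c| : c ∈ D separates x from y }`. -/
noncomputable def dD (D : Set (Set (Set X))) (x y : Set (Set X)) : ℕ∞ :=
  ⨆ (c : Set (Set X)) (_ : c ∈ D ∧ Seps x y c), c.encard

/-- The real-valued version of `dD` (equal to it whenever `dD` is finite). -/
noncomputable def dDr (D : Set (Set (Set X))) (x y : Set (Set X)) : ℝ :=
  ((dD D x y).toNat : ℝ)

/-- `D` is a dualisable system on the set with walls `(X,H)`. -/
def IsDualisable (H : Set (Set X)) (D : Set (Set (Set X))) : Prop :=
  (∀ c ∈ D, c ⊆ H) ∧ (∀ h ∈ H, ({h} : Set (Set X)) ∈ D) ∧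
    (∀ c ∈ D, ∀ c' ⊆ c, c' ∈ D) ∧
    ∀ s t : X, dD D (pUF H s) (pUF H t) < ⊤

/-- The dual space `X_D`: all ultrafilters at finite `d_D`-distance from the principal
ultrafilters of points of `X`. -/
def dualSpace (H : Set (Set X)) (D : Set (Set (Set X))) : Set (Set (Set X)) :=
  {x | IsUF H x ∧ ∀ s : X, dD D x (pUF H s) < ⊤}

/-- `c` is a chain of walls: the walls of `c` can be oriented so that the chosen
halfspaces are totally ordered by strict inclusion (equivalently, each wall separates
its neighbours). -/
def IsChain' (c : Set (Set X)) : Prop :=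
  ∃ σ : Set X → Set X, (∀ h ∈ c, σ h = h ∨ σ h = hᶜ) ∧
    ∀ h ∈ c, ∀ k ∈ c, h ≠ k → σ h ⊂ σ k ∨ σ k ⊂ σ h

/-- The walls of `h` and `k` cross: all four quarterspaces are nonempty. -/
def Crosses (h k : Set X) : Prop :=
  (h ∩ k).Nonempty ∧ (h ∩ kᶜ).Nonempty ∧ (hᶜ ∩ k).Nonempty ∧ (hᶜ ∩ kᶜ).Nonempty

/-- `c₁ ∪ c₂` is a chain in which all of `c₁` precedes all of `c₂`
(i.e. `c₁ ⊆ c₂⁻`). -/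
def ChainPrec (c₁ c₂ : Set (Set X)) : Prop :=
  ∃ σ : Set X → Set X, (∀ h ∈ c₁ ∪ c₂, σ h = h ∨ σ h = hᶜ) ∧
    (∀ h ∈ c₁ ∪ c₂, ∀ k ∈ c₁ ∪ c₂, h ≠ k → σ h ⊂ σ k ∨ σ k ⊂ σ h) ∧
    ∀ h ∈ c₁, ∀ k ∈ c₂, σ h ⊆ σ k

/-- `D` is `m`-gluable. -/
def Gluable (D : Set (Set (Set X))) (m : ℕ) : Prop :=
  ∀ c₁ ∈ D, ∀ c₂ ∈ D, ChainPrec c₁ c₂ →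
    ∃ e ⊆ c₁ ∪ c₂, e.encard ≤ (m : ℕ∞) ∧ (c₁ ∪ c₂) \ e ∈ D

/-- `D` is `L`-separated. -/
def Separated (D : Set (Set (Set X))) (L : ℕ) : Prop :=
  ∀ h₁ h₂ : Set X, ({h₁, h₂} : Set (Set X)) ∈ D → h₁ ≠ h₂ →
    ∀ c ∈ D, (∀ k ∈ c, Crosses k h₁ ∧ Crosses k h₂) → c.encard ≤ (L : ℕ∞)

/-- The median of three ultrafilters, given by majority vote on each wall. -/
def medUF (x y z : Set (Set X)) : Set (Set X) := x ∩ y ∪ x ∩ z ∪ y ∩ z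

/-- The halfspace `h` (with `x` on the `h`-side) separates `x` from the set `A` of
ultrafilters. -/
def SepsFromSet (x : Set (Set X)) (A : Set (Set (Set X))) (h : Set X) : Prop :=
  h ∈ x ∧ ∀ a ∈ A, h ∉ a

/-- The gate map to `A`: `gateMap A x` is obtained from `x` by reversing exactly the
walls separating `x` from `A`. -/
def gateMap (A : Set (Set (Set X))) (x : Set (Set X)) : Set (Set X) :=
  {h | (h ∈ x ∧ ¬ SepsFromSet x A h) ∨ (h ∉ x ∧ SepsFromSet x A hᶜ)}

/-- `A` is a gated subset of the dual space: it is nonempty and is the intersection of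
the dual space with a collection of halfspaces. -/
def IsGated (H : Set (Set X)) (D : Set (Set (Set X))) (A : Set (Set (Set X))) : Prop :=
  A.Nonempty ∧ ∃ H' ⊆ H, A = {x ∈ dualSpace H D | H' ⊆ x}

/-- The halfspace `h`, regarded as a subset of the dual space. -/
def halfSet (H : Set (Set X)) (D : Set (Set (Set X))) (h : Set X) : Set (Set (Set X)) :=
  {x ∈ dualSpace H D | h ∈ x}

/-! ### Walls of a quasitree coming from balls -/

variable (T : Type*) [MetricSpace T]

/-- `h` is (a halfspace of) one of the two walls of `T` determined by a connected
component `Ct` of the complement of the `K`-ball centred at `t`, namely the bipartitions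
`(Ct, T ∖ Ct)` and `(Ct ∪ B, T ∖ (Ct ∪ B))`. -/
def wallFromBall (K : ℝ) (t : T) (h : Set T) : Prop :=
  ∃ Ct : Set T, (∃ p ∈ (closedBall t K)ᶜ, Ct = connectedComponentIn (closedBall t K)ᶜ p) ∧
    (h = Ct ∨ h = Ctᶜ ∨ h = Ct ∪ closedBall t K ∨ h = (Ct ∪ closedBall t K)ᶜ)

/-- The walls of `T` determined by complementary components of `K`-balls. -/
def ballWalls (K : ℝ) : Set (Set T) := {h | ∃ t : T, wallFromBall T K t h}

/-- Disparate chains of ball-walls: chains of walls admitting defining `K`-balls whose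
centres are pairwise at distance at least `10K`. -/
def disparateChains (K : ℝ) : Set (Set (Set T)) :=
  {c | IsChain' c ∧ ∃ β : Set T → T, (∀ h ∈ c, wallFromBall T K (β h) h) ∧
    ∀ h ∈ c, ∀ k ∈ c, h ≠ k → 10 * K ≤ dist (β h) (β k)}

/-! ### The image of a space in a product of dual quasitrees, and its walls -/

variable {m : ℕ}

/-- The image `S` of `X` in the product `∏ T_{D_i}` of the dual quasitrees: tuples of
principal ultrafilters of the coordinates of points `f x`. -/
def SProd (T : Fin m → Type v) [∀ i, MetricSpace (T i)] (K : Fin m → ℝ)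
    (f : X → ∀ i, T i) : Type _ :=
  {p : ∀ i, Set (Set (T i)) // ∃ x : X, p = fun i => pUF (ballWalls (T i) (K i)) (f x i)}

/-- The natural map `X → S`. -/
def sEmb (T : Fin m → Type v) [∀ i, MetricSpace (T i)] (K : Fin m → ℝ)
    (f : X → ∀ i, T i) (x : X) : SProd T K f :=
  ⟨fun i => pUF (ballWalls (T i) (K i)) (f x i), ⟨x, rfl⟩⟩

/-- The `ℓ¹` metric on `S ⊆ ∏ T_{D_i}`. -/
noncomputable def dS (T : Fin m → Type v) [∀ i, MetricSpace (T i)] (K : Fin m → ℝ)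
    (f : X → ∀ i, T i) (p q : SProd T K f) : ℝ :=
  ∑ i, dDr (disparateChains (T i) (K i)) (p.1 i) (q.1 i)

/-- The halfspace of `S` induced by the halfspace `h` of the `i`-th factor. -/
def indHalf (T : Fin m → Type v) [∀ i, MetricSpace (T i)] (K : Fin m → ℝ)
    (f : X → ∀ i, T i) (i : Fin m) (h : Set (T i)) : Set (SProd T K f) :=
  {s | h ∈ s.1 i}

/-- The walls `W` on `S` induced by the ball-walls of the factors; two such walls cross
exactly when `S` meets all four quarterspaces. -/
def indWalls (T : Fin m → Type v) [∀ i, MetricSpace (T i)] (K : Fin m → ℝ)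
    (f : X → ∀ i, T i) : Set (Set (SProd T K f)) :=
  {A | ∃ (i : Fin m) (h : Set (T i)), h ∈ ballWalls (T i) (K i) ∧
    (A = indHalf T K f i h ∨ A = (indHalf T K f i h)ᶜ)}

/-- The monochromatic collections of walls of `S` of colour `i`: images of disparate
chains of the `i`-th factor. -/
def indMono (T : Fin m → Type v) [∀ i, MetricSpace (T i)] (K : Fin m → ℝ)
    (f : X → ∀ i, T i) (i : Fin m) : Set (Set (Set (SProd T K f))) :=
  {d | ∃ c ∈ disparateChains (T i) (K i), d = (indHalf T K f i) '' c}

/-- `D¹`: unions, over the factors, of (induced) disparate chains. -/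
def bigD1 (T : Fin m → Type v) [∀ i, MetricSpace (T i)] (K : Fin m → ℝ)
    (f : X → ∀ i, T i) : Set (Set (Set (SProd T K f))) :=
  {d | ∃ e : ∀ _ : Fin m, Set (Set (SProd T K f)),
    (∀ i, e i ∈ indMono T K f i) ∧ d = ⋃ i, e i}

/-- `D`: the elements of `D¹` that are chains. -/
def bigD (T : Fin m → Type v) [∀ i, MetricSpace (T i)] (K : Fin m → ℝ)
    (f : X → ∀ i, T i) : Set (Set (Set (SProd T K f))) :=
  {d ∈ bigD1 T K f | IsChain' d}

/-- `d` is an `L`-chain with respect to the system `D`: any member of `D` all of whose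
elements cross two given elements of `d` has cardinality at most `L`. -/
def LChainIn {Z : Type*} (D : Set (Set (Set Z))) (L : ℕ) (d : Set (Set Z)) : Prop :=
  ∀ h ∈ d, ∀ k ∈ d, ∀ d' ∈ D, (∀ w ∈ d', Crosses w h ∧ Crosses w k) →
    d'.encard ≤ (L : ℕ∞)

/-- `C`: the `L`-chains of `D`. -/
def bigC (T : Fin m → Type v) [∀ i, MetricSpace (T i)] (K : Fin m → ℝ)
    (f : X → ∀ i, T i) (L : ℕ) : Set (Set (Set (SProd T K f))) :=
  {d ∈ bigD T K f | LChainIn (bigD T K f) L d}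

/-! ### Intervals, distant walls and gates in the dual space `S_C` -/

variable {Z : Type*}

/-- `H(x,y)`: the walls not separating `x` from `y`, oriented (i.e. represented by the
halfspace) so that both `x` and `y` choose them. -/
def Hxy (W : Set (Set Z)) (x y : Set (Set Z)) : Set (Set Z) := {h ∈ W | h ∈ x ∧ h ∈ y}

/-- The interval `[x,y] = ∩_{h ∈ H(x,y)} h⁺` in the dual space. -/
def interval (W : Set (Set Z)) (D : Set (Set (Set Z))) (x y : Set (Set Z)) :
    Set (Set (Set Z)) :=
  {z ∈ dualSpace W D | Hxy W x y ⊆ z}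

/-- `H^L(x,y)`: the distant walls, i.e. the walls of `H(x,y)` such that every
monochromatic chain of `Cc` separating `x` from `y` and crossing them has length at
most `L`. -/
def distantWalls (W : Set (Set Z)) (Cc : Set (Set (Set Z))) (Mono : Set (Set Z) → Prop)
    (L : ℕ) (x y : Set (Set Z)) : Set (Set Z) :=
  {h ∈ Hxy W x y | ∀ c ∈ Cc, Mono c → Seps x y c → (∀ w ∈ c, Crosses w h) →
    c.encard ≤ (L : ℕ∞)}

/-- `I(x,y) = ∩_{h ∈ H^L(x,y)} h⁺`. -/
def Ixy (W : Set (Set Z)) (Cc : Set (Set (Set Z))) (Mono : Set (Set Z) → Prop)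
    (L : ℕ) (x y : Set (Set Z)) : Set (Set (Set Z)) :=
  {z ∈ dualSpace W Cc | distantWalls W Cc Mono L x y ⊆ z}

/-- The halfspace `h⁻`, regarded as a subset of the dual space (the ultrafilters not
choosing `h`). -/
def negSide (W : Set (Set Z)) (D : Set (Set (Set Z))) (h : Set Z) : Set (Set (Set Z)) :=
  {x ∈ dualSpace W D | h ∉ x}

/-- `H^L_t(x,y)`: the distant walls whose gate to `[x,y]` lies in the ball of radius `t`
about `x`. -/
def HLt (W : Set (Set Z)) (Cc : Set (Set (Set Z))) (Mono : Set (Set Z) → Prop)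
    (L : ℕ) (x y : Set (Set Z)) (t : ℝ) : Set (Set Z) :=
  {h ∈ distantWalls W Cc Mono L x y |
    ∀ u ∈ gateMap (interval W Cc x y) '' negSide W Cc h, dDr Cc x u ≤ t}

/-!
Let `u` be `z` with every wall of `H(x,y)` turned towards `x` and `y`. A wall separating `z`
from `u` is a wall of `H(x,y)` missed by `z`, hence not distant: some chain of `C` of length
`> L` separating `x` from `y` crosses it. Two such walls in one chain of `C` are nested, and a
long chain crossing the outer one also crosses the inner one, against the `L`-chain condition.
So chains of `C` separating `z` from `u` have at most one element, i.e. `d_C(z,u) ≤ 1`, and `u`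
lies in `[x,y]`.
-/

section Ultrafilters

variable {W x y z : Set (Set Z)} {a b h k w : Set Z}

theorem IsUF.compl_notMem (hx : IsUF W x) (hh : h ∈ x) : hᶜ ∉ x :=
  (hx.2.1 h (hx.1 hh)).mp hh

theorem IsUF.compl_mem (hx : IsUF W x) (hhW : h ∈ W) (hh : h ∉ x) : hᶜ ∈ x :=
  not_not.mp fun hc => hh ((hx.2.1 h hhW).mpr hc)

theorem IsUF.mem_of_subset (hx : IsUF W x) (hh : h ∈ x) (hk : k ∈ W) (hhk : h ⊆ k) :
    k ∈ x :=
  hx.2.2 h hh k hk hhk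

theorem crosses_compl_right_iff : Crosses w hᶜ ↔ Crosses w h := by
  simp only [Crosses, compl_compl]
  tauto

theorem Crosses.of_side (hw : Crosses w a) (hh : h = a ∨ h = aᶜ) : Crosses w h := by
  rcases hh with rfl | rfl
  exacts [hw, crosses_compl_right_iff.mpr hw]

/-- A wall separating `x` from `y` can neither avoid nor contain a halfspace chosen by both. -/
theorem Crosses.of_subset (hW : WallClosed W) (hx : IsUF W x) (hy : IsUF W y)
    (ha : a ∈ Hxy W x y) (hab : a ⊆ b) (hwW : w ∈ W) (hsep : w ∈ x ↔ w ∉ y)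
    (hw : Crosses w b) : Crosses w a := by
  obtain ⟨haW, hax, hay⟩ := ha
  obtain ⟨-, hwb', -, hwb''⟩ := hw
  have hba : bᶜ ⊆ aᶜ := compl_subset_compl.mpr hab
  refine ⟨?_, hwb'.mono (inter_subset_inter_right _ hba), ?_,
    hwb''.mono (inter_subset_inter_right _ hba)⟩
  · rw [inter_nonempty_iff_exists_right]
    by_contra! hwa
    have hwa : w ⊆ aᶜ := fun p hp hpa => hwa p hpa hp
    by_cases hwx : w ∈ x
    · exact hx.compl_notMem hax (hx.mem_of_subset hwx (hW a haW) hwa)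
    · have hwy : w ∈ y := not_not.mp (mt hsep.mpr hwx)
      exact hy.compl_notMem hay (hy.mem_of_subset hwy (hW a haW) hwa)
  · rw [inter_nonempty_iff_exists_right]
    by_contra! haw
    have haw : a ⊆ w := fun p hp => not_not.mp (haw p hp)
    exact hsep.mp (hx.mem_of_subset hax hwW haw) (hy.mem_of_subset hay hwW haw)

theorem subset_or_subset_of_side_subset (hW : WallClosed W) (hx : IsUF W x)
    (hz : IsUF W z) (ha : a ∈ Hxy W x y) (hb : b ∈ Hxy W x y) (haz : a ∉ z) (hbz : b ∉ z)
    {a' b' : Set Z} (ha' : a' = a ∨ a' = aᶜ) (hb' : b' = b ∨ b' = bᶜ) (hab : a' ⊆ b') :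
    a ⊆ b ∨ b ⊆ a := by
  rcases ha' with rfl | rfl <;> rcases hb' with rfl | rfl
  · exact Or.inl hab
  · exact absurd (hx.mem_of_subset ha.2.1 (hW b hb.1) hab) (hx.compl_notMem hb.2.1)
  · exact absurd (hz.mem_of_subset (hz.compl_mem ha.1 haz) hb.1 hab) hbz
  · exact Or.inr (compl_subset_compl.mp hab)

end Ultrafilters

section Distance

variable {D : Set (Set (Set Z))} {x y z : Set (Set Z)} {c : Set (Set Z)}

theorem encard_le_dD (hc : c ∈ D) (hs : Seps x y c) : c.encard ≤ dD D x y :=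
  le_iSup₂_of_le c ⟨hc, hs⟩ le_rfl

theorem seps_comm : Seps x y c ↔ Seps y x c := by
  simp only [Seps]
  exact forall₂_congr fun _ _ => by tauto

theorem dD_comm (D : Set (Set (Set Z))) (x y : Set (Set Z)) : dD D x y = dD D y x := by
  simp only [dD, seps_comm]

theorem dD_triangle (hD : ∀ c ∈ D, ∀ c' ⊆ c, c' ∈ D) (x y z : Set (Set Z)) :
    dD D x z ≤ dD D x y + dD D y z := by
  refine iSup₂_le fun c ⟨hc, hs⟩ => ?_
  set c₁ := {h ∈ c | h ∈ x ↔ h ∉ y}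
  have hc₁ : c₁ ⊆ c := sep_subset _ _
  have hs₁ : Seps x y c₁ := fun h hh => hh.2
  have hs₂ : Seps y z (c \ c₁) := fun h hh => by
    have := hs h hh.1
    have : ¬(h ∈ x ↔ h ∉ y) := fun hxy => hh.2 ⟨hh.1, hxy⟩
    tauto
  calc c.encard = (c₁ ∪ c \ c₁).encard := by rw [union_sdiff_cancel hc₁]
    _ ≤ c₁.encard + (c \ c₁).encard := encard_union_le _ _
    _ ≤ dD D x y + dD D y z := add_le_add (encard_le_dD (hD c hc c₁ hc₁) hs₁)
        (encard_le_dD (hD c hc _ sdiff_subset) hs₂)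

theorem dD_le_one_of_subsingleton (h : ∀ c ∈ D, Seps x y c → c.Subsingleton) :
    dD D x y ≤ 1 :=
  iSup₂_le fun c hc => encard_le_one_iff.mpr fun _ _ ha hb => h c hc.1 hc.2 ha hb

end Distance

theorem LChainIn.anti {D D' : Set (Set (Set Z))} {L : ℕ} {d : Set (Set Z)} (hDD' : D ⊆ D')
    (h : LChainIn D' L d) : LChainIn D L d :=
  fun h₁ hh₁ h₂ hh₂ d' hd' => h h₁ hh₁ h₂ hh₂ d' (hDD' hd')

structure IsLChainSystem (W : Set (Set Z)) (D : Set (Set (Set Z))) (L : ℕ) : Prop where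
  wallClosed : WallClosed W
  subset_walls : ∀ c ∈ D, c ⊆ W
  subset_mem : ∀ c ∈ D, ∀ c' ⊆ c, c' ∈ D
  isChain : ∀ c ∈ D, IsChain' c
  lChainIn : ∀ c ∈ D, LChainIn D L c

theorem interval_subset_Ixy (W : Set (Set Z)) (D : Set (Set (Set Z)))
    (Mono : Set (Set Z) → Prop) (L : ℕ) (x y : Set (Set Z)) :
    interval W D x y ⊆ Ixy W D Mono L x y :=
  fun _ hz => ⟨hz.1, fun _ hh => hz.2 hh.1⟩

theorem exists_long_chain_of_notMem_distantWalls {W : Set (Set Z)} {D : Set (Set (Set Z))}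
    {Mono : Set (Set Z) → Prop} {L : ℕ} {x y : Set (Set Z)} {a : Set Z}
    (ha : a ∈ Hxy W x y) (hd : a ∉ distantWalls W D Mono L x y) :
    ∃ c ∈ D, Seps x y c ∧ (∀ w ∈ c, Crosses w a) ∧ (L : ℕ∞) < c.encard := by
  by_contra! hcon
  exact hd ⟨ha, fun c hc _ hs hcr => hcon c hc hs hcr⟩

/-- The gate of `z` in `[x,y]`. -/
def intervalGate (W : Set (Set Z)) (x y z : Set (Set Z)) : Set (Set Z) :=
  Hxy W x y ∪ {h ∈ z | hᶜ ∉ Hxy W x y}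

section IntervalGate

variable {W : Set (Set Z)} {D : Set (Set (Set Z))} {Mono : Set (Set Z) → Prop} {L : ℕ}
  {x y z : Set (Set Z)}

theorem Hxy_subset_intervalGate : Hxy W x y ⊆ intervalGate W x y z :=
  subset_union_left

theorem isUF_intervalGate (hW : WallClosed W) (hx : IsUF W x) (hy : IsUF W y)
    (hz : IsUF W z) : IsUF W (intervalGate W x y z) := by
  have hHxy : ∀ h ∈ Hxy W x y, hᶜ ∉ Hxy W x y := fun h hh hc =>
    hx.compl_notMem hh.2.1 hc.2.1
  refine ⟨?_, fun h hhW => ⟨?_, fun hcu => ?_⟩, ?_⟩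
  · rintro h (hh | ⟨hhz, -⟩)
    exacts [hh.1, hz.1 hhz]
  · rintro (hh | ⟨hhz, hhc⟩) (hc | ⟨hcz, hcc⟩)
    · exact hHxy h hh hc
    · exact hcc (by rwa [compl_compl])
    · exact hhc hc
    · exact hz.compl_notMem hhz hcz
  · by_cases hh : h ∈ Hxy W x y
    · exact Or.inl hh
    · have hhc : hᶜ ∉ Hxy W x y := fun hc => hcu (Or.inl hc)
      refine Or.inr ⟨not_not.mp fun hhz => hcu (Or.inr ⟨hz.compl_mem hhW hhz, ?_⟩), hhc⟩
      rwa [compl_compl]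
  · rintro h (hh | ⟨hhz, hhc⟩) k hkW hhk
    · exact Or.inl ⟨hkW, hx.mem_of_subset hh.2.1 hkW hhk, hy.mem_of_subset hh.2.2 hkW hhk⟩
    · refine Or.inr ⟨hz.mem_of_subset hhz hkW hhk, fun hkc => hhc ?_⟩
      have hhW : hᶜ ∈ W := hW h (hz.1 hhz)
      have hkh : kᶜ ⊆ hᶜ := compl_subset_compl.mpr hhk
      exact ⟨hhW, hx.mem_of_subset hkc.2.1 hhW hkh, hy.mem_of_subset hkc.2.2 hhW hkh⟩

theorem exists_side_of_seps_intervalGate (hz : IsUF W z) {h : Set Z}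
    (hsep : h ∈ z ↔ h ∉ intervalGate W x y z) :
    ∃ a ∈ Hxy W x y, a ∉ z ∧ (h = a ∨ h = aᶜ) := by
  by_cases hh : h ∈ Hxy W x y
  · exact ⟨h, hh, fun hhz => hsep.mp hhz (Or.inl hh), Or.inl rfl⟩
  by_cases hhc : hᶜ ∈ Hxy W x y
  · have hhz : h ∈ z := hsep.mpr fun hu => hu.elim hh fun hu => hu.2 hhc
    exact ⟨hᶜ, hhc, hz.compl_notMem hhz, Or.inr (compl_compl h).symm⟩
  by_cases hhz : h ∈ z
  · exact absurd (Or.inr ⟨hhz, hhc⟩) (hsep.mp hhz)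
  · exact absurd (hsep.mpr fun hu => hu.elim hh fun hu => hhz hu.1) hhz

theorem IsLChainSystem.not_sides_of_nested (hD : IsLChainSystem W D L) (hx : IsUF W x)
    (hy : IsUF W y) {c : Set (Set Z)} (hc : c ∈ D) {h k a b : Set Z} (hh : h ∈ c)
    (hk : k ∈ c) (ha : a ∈ Hxy W x y) (hb : b ∈ Hxy W x y)
    (hbd : b ∉ distantWalls W D Mono L x y) (hha : h = a ∨ h = aᶜ) (hkb : k = b ∨ k = bᶜ)
    (hab : a ⊆ b) : False := by
  obtain ⟨c₀, hc₀, hsep₀, hcr₀, hlen⟩ := exists_long_chain_of_notMem_distantWalls hb hbd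
  have hcross : ∀ w ∈ c₀, Crosses w h ∧ Crosses w k := fun w hw =>
    ⟨(Crosses.of_subset hD.wallClosed hx hy ha hab (hD.subset_walls c₀ hc₀ hw)
      (hsep₀ w hw) (hcr₀ w hw)).of_side hha, (hcr₀ w hw).of_side hkb⟩
  exact not_le.mpr hlen (hD.lChainIn c hc h hh k hk c₀ hc₀ hcross)

theorem IsLChainSystem.subsingleton_of_seps_intervalGate (hD : IsLChainSystem W D L)
    (hx : IsUF W x) (hy : IsUF W y) (hz : IsUF W z)
    (hzI : distantWalls W D Mono L x y ⊆ z) {c : Set (Set Z)} (hc : c ∈ D)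
    (hsep : Seps z (intervalGate W x y z) c) : c.Subsingleton := by
  intro h hh k hk
  by_contra hne
  obtain ⟨a, ha, haz, hha⟩ := exists_side_of_seps_intervalGate hz (hsep h hh)
  obtain ⟨b, hb, hbz, hkb⟩ := exists_side_of_seps_intervalGate hz (hsep k hk)
  obtain ⟨σ, hσ, hσc⟩ := hD.isChain c hc
  have hσh : σ h = a ∨ σ h = aᶜ := by
    rcases hσ h hh with e | e <;> rcases hha with rfl | rfl <;> simp [e]
  have hσk : σ k = b ∨ σ k = bᶜ := by
    rcases hσ k hk with e | e <;> rcases hkb with rfl | rfl <;> simp [e]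
  have hnested : a ⊆ b ∨ b ⊆ a := by
    rcases hσc h hh k hk hne with hlt | hlt
    · exact subset_or_subset_of_side_subset hD.wallClosed hx hz ha hb haz hbz hσh hσk hlt.1
    · exact (subset_or_subset_of_side_subset hD.wallClosed hx hz hb ha hbz haz hσk hσh
        hlt.1).symm
  rcases hnested with hab | hba
  · exact hD.not_sides_of_nested hx hy hc hh hk ha hb (fun hd => hbz (hzI hd)) hha hkb hab
  · exact hD.not_sides_of_nested hx hy hc hk hh hb ha (fun hd => haz (hzI hd)) hkb hha hba

theorem IsLChainSystem.exists_mem_interval_dD_le_one (hD : IsLChainSystem W D L)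
    (hx : IsUF W x) (hy : IsUF W y) (hz : z ∈ Ixy W D Mono L x y) :
    ∃ u ∈ interval W D x y, dD D z u ≤ 1 := by
  obtain ⟨⟨hzUF, hzfin⟩, hzI⟩ := hz
  have hzu : dD D z (intervalGate W x y z) ≤ 1 := dD_le_one_of_subsingleton fun c hc hs =>
    hD.subsingleton_of_seps_intervalGate hx hy hzUF hzI hc hs
  refine ⟨intervalGate W x y z, ⟨⟨isUF_intervalGate hD.wallClosed hx hy hzUF, fun s => ?_⟩,
    Hxy_subset_intervalGate⟩, hzu⟩
  calc dD D (intervalGate W x y z) (pUF W s)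
      ≤ dD D z (intervalGate W x y z) + dD D z (pUF W s) := by
        rw [dD_comm D z]; exact dD_triangle hD.subset_mem _ _ _
    _ < ⊤ := ENat.add_lt_top.mpr ⟨hzu.trans_lt ENat.one_lt_top, hzfin s⟩

end IntervalGate

section InducedWalls

variable {X : Type*} (T : Fin m → Type v) [∀ i, MetricSpace (T i)] (K : Fin m → ℝ)
  (f : X → ∀ i, T i)

theorem indWalls_wallClosed : WallClosed (indWalls T K f) := by
  rintro A ⟨i, h, hmem, rfl | rfl⟩
  · exact ⟨i, h, hmem, Or.inr rfl⟩
  · exact ⟨i, h, hmem, Or.inl (compl_compl _)⟩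

theorem IsChain'.subset {c c' : Set (Set Z)} (h : IsChain' c) (hsub : c' ⊆ c) :
    IsChain' c' := by
  obtain ⟨σ, h1, h2⟩ := h
  exact ⟨σ, fun a ha => h1 a (hsub ha), fun a ha b hb => h2 a (hsub ha) b (hsub hb)⟩

theorem disparateChains_subset_mem {T' : Type*} [MetricSpace T'] {K' : ℝ}
    {c c' : Set (Set T')} (h : c ∈ disparateChains T' K') (hsub : c' ⊆ c) :
    c' ∈ disparateChains T' K' := by
  obtain ⟨hch, β, hβ1, hβ2⟩ := h
  exact ⟨hch.subset hsub, β, fun a ha => hβ1 a (hsub ha),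
    fun a ha b hb => hβ2 a (hsub ha) b (hsub hb)⟩

theorem bigC_subset_indWalls {L : ℕ} : ∀ c ∈ bigC T K f L, c ⊆ indWalls T K f := by
  rintro c ⟨⟨⟨e, he, rfl⟩, -⟩, -⟩ A hA
  obtain ⟨i, hAi⟩ := mem_iUnion.mp hA
  obtain ⟨d, ⟨-, β, hβ, -⟩, hde⟩ := he i
  obtain ⟨h, hhd, rfl⟩ := hde ▸ hAi
  exact ⟨i, h, ⟨β h, hβ h hhd⟩, Or.inl rfl⟩

theorem bigC_subset_mem {L : ℕ} : ∀ c ∈ bigC T K f L, ∀ c' ⊆ c, c' ∈ bigC T K f L := by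
  rintro c ⟨⟨⟨e, he, rfl⟩, hch⟩, hLC⟩ c' hsub
  refine ⟨⟨⟨fun i => e i ∩ c', fun i => ?_, ?_⟩, hch.subset hsub⟩,
    fun h hh k hk => hLC h (hsub hh) k (hsub hk)⟩
  · obtain ⟨d, hd, hde⟩ := he i
    refine ⟨{h ∈ d | indHalf T K f i h ∈ c'},
      disparateChains_subset_mem hd (sep_subset _ _), ?_⟩
    simp only [hde]
    ext A
    simp only [mem_image, mem_inter_iff, mem_ofPred_eq]
    constructor
    · rintro ⟨⟨h, hh, rfl⟩, hA⟩; exact ⟨h, ⟨hh, hA⟩, rfl⟩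
    · rintro ⟨h, ⟨hh, hA⟩, rfl⟩; exact ⟨⟨h, hh, rfl⟩, hA⟩
  · rw [← iUnion_inter, inter_eq_self_of_subset_right hsub]

theorem isLChainSystem_bigC (L : ℕ) : IsLChainSystem (indWalls T K f) (bigC T K f L) L where
  wallClosed := indWalls_wallClosed T K f
  subset_walls := bigC_subset_indWalls T K f
  subset_mem := bigC_subset_mem T K f
  isChain _ hc := hc.1.2
  lChainIn _ hc := hc.2.anti (sep_subset _ _)

end InducedWalls

theorem interval_and_Ixy_close_general
    {X : Type u}
    {m : ℕ} (T : Fin m → Type u) [∀ i, MetricSpace (T i)]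
    (K : Fin m → ℝ)
    (f : X → ∀ i, T i)
    (L : ℕ)
    :
    ∀ x y : Set (Set (SProd T K f)),
      x ∈ dualSpace (indWalls T K f) (bigC T K f L) →
      y ∈ dualSpace (indWalls T K f) (bigC T K f L) →
      interval (indWalls T K f) (bigC T K f L) x y ⊆
        Ixy (indWalls T K f) (bigC T K f L) (fun c => ∃ i, c ∈ indMono T K f i) L x y ∧
      ∀ z ∈ Ixy (indWalls T K f) (bigC T K f L)
          (fun c => ∃ i, c ∈ indMono T K f i) L x y,
        ∃ u ∈ interval (indWalls T K f) (bigC T K f L) x y,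
          dD (bigC T K f L) z u ≤ (1 : ℕ∞) := fun _ _ hx hy =>
  ⟨interval_subset_Ixy _ _ _ _ _ _, fun _ hz =>
    (isLChainSystem_bigC T K f L).exists_mem_interval_dD_le_one hx.1 hy.1 hz⟩

/-- Lemma 5.4.  In the dual space `S_C`, for every `x,y ∈ S_C` one
has `[x,y] ⊆ I(x,y) ⊆ N([x,y],1)`, where `N(·,1)` is the closed `1`-neighbourhood in
the metric `d_C`, and `I(x,y)` is the intersection of the halfspaces determined by the
distant walls (monochromaticity being membership in some induced `Dᵢ`). -/
theorem interval_and_Ixy_close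
    {G : Type w} [Group G] {X : Type u}
    (ρ : G →* Equiv.Perm X) (dX : X → X → ℝ) (μX : X → X → X → X)
    (δ lam cc : ℝ) {m : ℕ} (T : Fin m → Type u) [∀ i, MetricSpace (T i)]
    (K : Fin m → ℝ) (μT : ∀ i, T i → T i → T i → T i)
    (f : X → ∀ i, T i) (α : G →* Equiv.Perm (∀ i, T i))
    (hδ : 0 ≤ δ)
    (hhypX : IsHyp dX δ) (hrgX : RGSpace dX δ) (hmedX : IsCoarseMedian dX μX δ)
    (hisoX : ∀ (g : G) (x y : X), dX (ρ g x) (ρ g y) = dX x y)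
    (hqt : ∀ i, IsQuasitree (fun a b : T i => dist a b) lam)
    (hhypT : ∀ i, IsHyp (fun a b : T i => dist a b) δ)
    (hK : ∀ i, 100 * δ < K i)
    (hdisc : ∀ (i : Fin m) (t : T i), ¬ IsPreconnected (closedBall t (K i))ᶜ)
    (hmedT : ∀ i, IsCoarseMedian (fun a b : T i => dist a b) (μT i) cc)
    (hqie : IsQIE dX (l1distF fun i (a b : T i) => dist a b) f lam)
    (hqm : ∀ x y z : X,
      l1distF (fun i (a b : T i) => dist a b)
        (fun i => μT i (f x i) (f y i) (f z i)) (f (μX x y z)) ≤ cc)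
    (hisoA : ∀ (g : G) (p q : ∀ i, T i),
      l1distF (fun i (a b : T i) => dist a b) (α g p) (α g q)
        = l1distF (fun i (a b : T i) => dist a b) p q)
    (hequiv : ∀ (g : G) (x : X), f (ρ g x) = α g (f x))
    (L : ℕ)
    (hgrid : ∀ (i j : Fin m) (d₁ d₂ : Set (Set (SProd T K f))),
      d₁ ∈ indMono T K f i → d₂ ∈ indMono T K f j →
      (∀ w₁ ∈ d₁, ∀ w₂ ∈ d₂, Crosses w₁ w₂) →
      min d₁.encard d₂.encard ≤ (L : ℕ∞))
    :
    ∀ x y : Set (Set (SProd T K f)),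
      x ∈ dualSpace (indWalls T K f) (bigC T K f L) →
      y ∈ dualSpace (indWalls T K f) (bigC T K f L) →
      interval (indWalls T K f) (bigC T K f L) x y ⊆
        Ixy (indWalls T K f) (bigC T K f L) (fun c => ∃ i, c ∈ indMono T K f i) L x y ∧
      ∀ z ∈ Ixy (indWalls T K f) (bigC T K f L)
          (fun c => ∃ i, c ∈ indMono T K f i) L x y,
        ∃ u ∈ interval (indWalls T K f) (bigC T K f L) x y,
          dD (bigC T K f L) z u ≤ (1 : ℕ∞) :=
  interval_and_Ixy_close_general T K f L

end GSC
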